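/- arXiv:2109.10307 — 9 statements merged into one kernel-verified Lean document; each statement's English description precedes it below -/
import Mathlib

section
/- Let k be a real number with k² ≠ 36 and let I ⊆ ℝ be an open interval. (i) If P, Q, R : I → ℝ are differentiable and satisfy the first-order system P' = (1/6)(P² − Q), Q' = (2/3)(PQ − R), R' = PR + (k²/(36 − k²))Q² on I, then y = P is three times differentiable and satisfies the generalised Chazy equation y''' − 2yy'' + 3(y')² − (4/(36 − k²))(6y' − y²)² = 0 on I. (ii) Conversely, if y : I → ℝ is three times differentiable and satisfies the generalised Chazy equation with parameter k on I, then P = y, Q = y² − 6y', R = PQ − (3/2)Q' satisfy the first-order system on I. -/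
open Filter


/-- Equivalence between the generalised Chazy equation with parameter `k`
(`k² ≠ 36`) and the associated first-order system
`P' = (1/6)(P² − Q)`, `Q' = (2/3)(PQ − R)`, `R' = PR + (k²/(36 − k²))Q²`
on an open interval `I`. -/
theorem generalized_chazy_first_order_system_equiv
    (k : ℝ) (hk : k ^ 2 ≠ 36) (I : Set ℝ) (hIopen : IsOpen I) (hIint : I.OrdConnected) :
    -- (i) from the first-order system to the third-order generalised Chazy equation
    (∀ P Q R : ℝ → ℝ,
      (∀ x ∈ I, HasDerivAt P ((1 / 6) * (P x ^ 2 - Q x)) x) →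
      (∀ x ∈ I, HasDerivAt Q ((2 / 3) * (P x * Q x - R x)) x) →
      (∀ x ∈ I, HasDerivAt R (P x * R x + (k ^ 2 / (36 - k ^ 2)) * Q x ^ 2) x) →
      ((∀ x ∈ I, DifferentiableAt ℝ P x ∧ DifferentiableAt ℝ (deriv P) x ∧
          DifferentiableAt ℝ (deriv (deriv P)) x) ∧
       (∀ x ∈ I,
          deriv (deriv (deriv P)) x - 2 * P x * deriv (deriv P) x + 3 * (deriv P x) ^ 2
            - (4 / (36 - k ^ 2)) * (6 * deriv P x - P x ^ 2) ^ 2 = 0)))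
    ∧
    -- (ii) from the generalised Chazy equation back to the first-order system,
    -- with P = y, Q = y² − 6y', R = PQ − (3/2)Q'
    (∀ y : ℝ → ℝ,
      (∀ x ∈ I, DifferentiableAt ℝ y x ∧ DifferentiableAt ℝ (deriv y) x ∧
          DifferentiableAt ℝ (deriv (deriv y)) x) →
      (∀ x ∈ I,
         deriv (deriv (deriv y)) x - 2 * y x * deriv (deriv y) x + 3 * (deriv y x) ^ 2
           - (4 / (36 - k ^ 2)) * (6 * deriv y x - y x ^ 2) ^ 2 = 0) →
      (∀ x ∈ I,
        HasDerivAt y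
          ((1 / 6) * (y x ^ 2 - (y x ^ 2 - 6 * deriv y x))) x ∧
        HasDerivAt (fun t => y t ^ 2 - 6 * deriv y t)
          ((2 / 3) * (y x * (y x ^ 2 - 6 * deriv y x) -
            (y x * (y x ^ 2 - 6 * deriv y x)
              - (3 / 2) * deriv (fun t => y t ^ 2 - 6 * deriv y t) x))) x ∧
        HasDerivAt (fun t => y t * (y t ^ 2 - 6 * deriv y t)
              - (3 / 2) * deriv (fun s => y s ^ 2 - 6 * deriv y s) t)
          (y x * (y x * (y x ^ 2 - 6 * deriv y x)
              - (3 / 2) * deriv (fun s => y s ^ 2 - 6 * deriv y s) x)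
            + (k ^ 2 / (36 - k ^ 2)) * (y x ^ 2 - 6 * deriv y x) ^ 2) x)) := by
  have h36 : (36 : ℝ) - k ^ 2 ≠ 0 := sub_ne_zero.mpr (Ne.symm hk)
  constructor
  · intro P Q R hP hQ hR
    have h1 : ∀ x ∈ I, HasDerivAt (deriv P)
        ((P x ^ 3 - 3 * (P x * Q x) + 2 * R x) / 18) x := by
      intro x hx
      have hd : HasDerivAt (fun t => (1 / 6) * (P t ^ 2 - Q t))
          ((P x ^ 3 - 3 * (P x * Q x) + 2 * R x) / 18) x := by
        have h := (((hP x hx).pow 2).sub (hQ x hx)).const_mul (1 / 6 : ℝ)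
        refine h.congr_deriv ?_
        ring
      refine hd.congr_of_eventuallyEq ?_
      filter_upwards [hIopen.mem_nhds hx] with t ht
      exact (hP t ht).deriv
    have h2 : ∀ x ∈ I, HasDerivAt (deriv (deriv P))
        (((P x ^ 2 - Q x) ^ 2 / 2 - 2 * P x ^ 2 * Q x + 4 * (P x * R x)
          + 2 * (k ^ 2 / (36 - k ^ 2)) * Q x ^ 2) / 18) x := by
      intro x hx
      have hd : HasDerivAt (fun t => (P t ^ 3 - 3 * (P t * Q t) + 2 * R t) / 18)
          (((P x ^ 2 - Q x) ^ 2 / 2 - 2 * P x ^ 2 * Q x + 4 * (P x * R x)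
            + 2 * (k ^ 2 / (36 - k ^ 2)) * Q x ^ 2) / 18) x := by
        have h := ((((hP x hx).pow 3).sub
          (((hP x hx).mul (hQ x hx)).const_mul (3 : ℝ))).add
          ((hR x hx).const_mul (2 : ℝ))).div_const 18
        refine h.congr_deriv ?_
        ring
      refine hd.congr_of_eventuallyEq ?_
      filter_upwards [hIopen.mem_nhds hx] with t ht
      exact (h1 t ht).deriv
    constructor
    · intro x hx
      exact ⟨(hP x hx).differentiableAt, (h1 x hx).differentiableAt,
        (h2 x hx).differentiableAt⟩
    · intro x hx
      rw [(hP x hx).deriv, (h1 x hx).deriv, (h2 x hx).deriv]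
      field_simp
      ring
  · intro y hdiff hChazy x hx
    obtain ⟨hy, hy1, hy2⟩ := hdiff x hx
    have hQf : ∀ t ∈ I, HasDerivAt (fun s => y s ^ 2 - 6 * deriv y s)
        (2 * y t * deriv y t - 6 * deriv (deriv y) t) t := by
      intro t ht
      obtain ⟨h0, h1, _⟩ := hdiff t ht
      have h := (h0.hasDerivAt.pow 2).sub (h1.hasDerivAt.const_mul (6 : ℝ))
      refine h.congr_deriv ?_
      ring
    have hdQ : deriv (fun s => y s ^ 2 - 6 * deriv y s) x
        = 2 * y x * deriv y x - 6 * deriv (deriv y) x := (hQf x hx).deriv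
    refine ⟨?_, ?_, ?_⟩
    · refine hy.hasDerivAt.congr_deriv ?_
      ring
    · convert hQf x hx using 1
      rw [hdQ]
      ring
    · have hg : HasDerivAt (fun t => 2 * y t * deriv y t - 6 * deriv (deriv y) t)
          (2 * deriv y x * deriv y x + 2 * y x * deriv (deriv y) x
            - 6 * deriv (deriv (deriv y)) x) x := by
        have h := ((hy.hasDerivAt.const_mul (2 : ℝ)).mul hy1.hasDerivAt).sub
          (hy2.hasDerivAt.const_mul (6 : ℝ))
        exact h
      have hdQ' : HasDerivAt (deriv (fun s => y s ^ 2 - 6 * deriv y s))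
          (2 * deriv y x * deriv y x + 2 * y x * deriv (deriv y) x
            - 6 * deriv (deriv (deriv y)) x) x := by
        refine hg.congr_of_eventuallyEq ?_
        filter_upwards [hIopen.mem_nhds hx] with t ht
        exact (hQf t ht).deriv
      have hR := (hy.hasDerivAt.mul (hQf x hx)).sub (hdQ'.const_mul (3 / 2 : ℝ))
      have hd3 : deriv (deriv (deriv y)) x
          = 2 * y x * deriv (deriv y) x - 3 * (deriv y x) ^ 2
            + (4 / (36 - k ^ 2)) * (6 * deriv y x - y x ^ 2) ^ 2 := by
        have hC := hChazy x hx
        linarith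
      refine hR.congr_deriv ?_
      rw [hdQ, hd3]
      field_simp
      ring
end

section
/- Let k be a real number with k ≠ 0 and k² ≠ 36, let g₃ ∈ ℝ, and let I ⊆ ℝ be an open interval. Suppose ℘ : I → ℝ is twice differentiable and satisfies (℘')² = 4℘³ − g₃ and ℘'' = 6℘² on I, and suppose Φ : I → ℝ is twice differentiable and satisfies the Lamé equation Φ'' + ((k+6)(k−6)/(4k²))·℘·Φ = 0 on I. Define P = 6Φ'Φ, Q = (9(k²−36)/k²)·℘·Φ⁴, and R = −(27/2)·((k²−36)/k²)·℘'·Φ⁶. Then on I: Φ²·P' = (1/6)(P² − Q), Φ²·Q' = (2/3)(PQ − R), and Φ²·R' = PR + (k²/(36 − k²))Q². (These are the equations of the first-order Chazy system with parameter k after the change of independent variable x with dx = Φ^{−2} dz̃, since d/dx = Φ²·d/dz̃.) -/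
/-- The Lamé parametrisation of solutions of the first-order Chazy system.
Here `p` plays the role of the Weierstrass ℘-function with invariants `g₂ = 0, g₃`
(represented by a twice differentiable real function satisfying `(℘')² = 4℘³ − g₃` and
`℘'' = 6℘²`), and `Φ` solves the Lamé equation `Φ'' + ((k+6)(k−6)/(4k²))·℘·Φ = 0`.
With `P = 6Φ'Φ`, `Q = (9(k²−36)/k²)·℘·Φ⁴`, `R = −(27/2)·((k²−36)/k²)·℘'·Φ⁶`, the
first-order Chazy system holds after the change of independent variable `dx = Φ⁻² dz̃`. -/
theorem lame_parametrisation_chazy_system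
    (k g3 : ℝ) (hk : k ≠ 0) (hk2 : k ^ 2 ≠ 36)
    (I : Set ℝ) (hIopen : IsOpen I) (hIint : I.OrdConnected)
    (p p' Φ Φ' : ℝ → ℝ)
    (hp : ∀ x ∈ I, HasDerivAt p (p' x) x)
    (hp' : ∀ x ∈ I, HasDerivAt p' (6 * p x ^ 2) x)
    (hweier : ∀ x ∈ I, (p' x) ^ 2 = 4 * p x ^ 3 - g3)
    (hΦ : ∀ x ∈ I, HasDerivAt Φ (Φ' x) x)
    (hΦ' : ∀ x ∈ I, HasDerivAt Φ' (-(((k + 6) * (k - 6)) / (4 * k ^ 2)) * p x * Φ x) x) :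
    ∀ x ∈ I,
      Φ x ^ 2 * deriv (fun t => 6 * Φ' t * Φ t) x
        = (1 / 6) * ((6 * Φ' x * Φ x) ^ 2 - (9 * (k ^ 2 - 36) / k ^ 2) * p x * Φ x ^ 4) ∧
      Φ x ^ 2 * deriv (fun t => (9 * (k ^ 2 - 36) / k ^ 2) * p t * Φ t ^ 4) x
        = (2 / 3) * ((6 * Φ' x * Φ x) * ((9 * (k ^ 2 - 36) / k ^ 2) * p x * Φ x ^ 4)
            - (-(27 / 2) * ((k ^ 2 - 36) / k ^ 2) * p' x * Φ x ^ 6)) ∧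
      Φ x ^ 2 * deriv (fun t => -(27 / 2) * ((k ^ 2 - 36) / k ^ 2) * p' t * Φ t ^ 6) x
        = (6 * Φ' x * Φ x) * (-(27 / 2) * ((k ^ 2 - 36) / k ^ 2) * p' x * Φ x ^ 6)
            + (k ^ 2 / (36 - k ^ 2)) * ((9 * (k ^ 2 - 36) / k ^ 2) * p x * Φ x ^ 4) ^ 2 := by
  intro x hx
  have hΦx := hΦ x hx
  have hΦ'x := hΦ' x hx
  have hpx := hp x hx
  have hp'x := hp' x hx
  have h36 : (36 : ℝ) - k ^ 2 ≠ 0 := fun h => hk2 (by linarith)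
  have d1 : deriv (fun t => 6 * Φ' t * Φ t) x
      = 6 * (-(((k + 6) * (k - 6)) / (4 * k ^ 2)) * p x * Φ x) * Φ x
        + 6 * Φ' x * Φ' x := by
    have := ((hΦ'x.const_mul 6).mul hΦx)
    simpa [Pi.mul_def, mul_comm, mul_assoc, mul_left_comm] using this.deriv
  have d2 : deriv (fun t => (9 * (k ^ 2 - 36) / k ^ 2) * p t * Φ t ^ 4) x
      = (9 * (k ^ 2 - 36) / k ^ 2) * p' x * Φ x ^ 4
        + (9 * (k ^ 2 - 36) / k ^ 2) * p x * (4 * Φ x ^ 3 * Φ' x) := by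
    have := (hpx.const_mul (9 * (k ^ 2 - 36) / k ^ 2)).mul (hΦx.pow 4)
    have h := this.deriv
    simp only [Nat.cast_ofNat, Pi.mul_def, Pi.pow_def] at h
    rw [show (fun t => (9 * (k ^ 2 - 36) / k ^ 2) * p t * Φ t ^ 4)
        = fun t => (9 * (k ^ 2 - 36) / k ^ 2) * p t * Φ t ^ 4 from rfl]
    convert h using 1 <;> ring
  have d3 : deriv (fun t => -(27 / 2) * ((k ^ 2 - 36) / k ^ 2) * p' t * Φ t ^ 6) x
      = -(27 / 2) * ((k ^ 2 - 36) / k ^ 2) * (6 * p x ^ 2) * Φ x ^ 6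
        + -(27 / 2) * ((k ^ 2 - 36) / k ^ 2) * p' x * (6 * Φ x ^ 5 * Φ' x) := by
    have := (hp'x.const_mul (-(27 / 2) * ((k ^ 2 - 36) / k ^ 2))).mul (hΦx.pow 6)
    have h := this.deriv
    simp only [Nat.cast_ofNat, Pi.mul_def, Pi.pow_def] at h
    convert h using 1 <;> ring
  refine ⟨?_, ?_, ?_⟩
  · rw [d1]; field_simp; ring
  · rw [d2]; field_simp; ring
  · rw [d3]; field_simp; ring
end

section
/- Let k be a real number with k² ≠ 36, set α = k²/(k² − 36), and let I ⊆ ℝ be an open interval. Suppose P, Q, R : I → ℝ are differentiable and satisfy the first-order Chazy system P' = (1/6)(P² − Q), Q' = (2/3)(PQ − R), R' = PR + (k²/(36 − k²))Q² on I, and let Δ : I → ℝ be a positive differentiable function with Δ' = 2PΔ. Then the function μ := Q·Δ^{−1/3} satisfies Δ^{−1/6}·( Δ^{−1/6}·μ' )' = (2/3)·α·μ² on I. (Equivalently, after the change of variable z̃ with dz̃ = Δ^{1/6} dx, μ satisfies the Weierstrass-type equation μ_{z̃z̃} = (2/3)α μ².) -/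
/-- If `(P,Q,R)` solves the first-order Chazy system with parameter `k`
(`k² ≠ 36`, `α = k²/(k² − 36)`) and `Δ > 0` satisfies `Δ' = 2PΔ` (i.e. `Δ = e^{2∫P dx}`),
then `μ := Q·Δ^{−1/3}` satisfies `Δ^{−1/6}·(Δ^{−1/6}·μ')' = (2/3)·α·μ²`, i.e. the
Weierstrass-type equation `μ_{z̃z̃} = (2/3)αμ²` in the variable `z̃` with `dz̃ = Δ^{1/6} dx`. -/
theorem chazy_system_weierstrass_reduction
    (k : ℝ) (hk : k ^ 2 ≠ 36) (I : Set ℝ) (hIopen : IsOpen I) (hIint : I.OrdConnected)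
    (P Q R Δ : ℝ → ℝ)
    (hP : ∀ x ∈ I, HasDerivAt P ((1 / 6) * (P x ^ 2 - Q x)) x)
    (hQ : ∀ x ∈ I, HasDerivAt Q ((2 / 3) * (P x * Q x - R x)) x)
    (hR : ∀ x ∈ I, HasDerivAt R (P x * R x + (k ^ 2 / (36 - k ^ 2)) * Q x ^ 2) x)
    (hΔpos : ∀ x ∈ I, 0 < Δ x)
    (hΔ : ∀ x ∈ I, HasDerivAt Δ (2 * P x * Δ x) x) :
    ∀ x ∈ I,
      Δ x ^ (-(1 : ℝ) / 6) *
          deriv (fun t => Δ t ^ (-(1 : ℝ) / 6) *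
            deriv (fun s => Q s * Δ s ^ (-(1 : ℝ) / 3)) t) x
        = (2 / 3) * (k ^ 2 / (k ^ 2 - 36)) * (Q x * Δ x ^ (-(1 : ℝ) / 3)) ^ 2 := by
  have hd : ∀ y ∈ I, Δ y ≠ 0 := fun y hy => (hΔpos y hy).ne'
  -- inner derivative: μ' = -(2/3) R Δ^{-1/3}
  have hμ : ∀ y ∈ I, HasDerivAt (fun s => Q s * Δ s ^ (-(1 : ℝ) / 3))
      (-(2 / 3) * R y * Δ y ^ (-(1 : ℝ) / 3)) y := by
    intro y hy
    have h1 : HasDerivAt (fun s => Δ s ^ (-(1 : ℝ) / 3))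
        (2 * P y * Δ y * (-(1 : ℝ) / 3) * Δ y ^ ((-(1 : ℝ) / 3) - 1)) y :=
      (hΔ y hy).rpow_const (Or.inl (hd y hy))
    have h2 := (hQ y hy).mul h1
    have h3 : Δ y ^ ((-(1 : ℝ) / 3) - 1) * Δ y = Δ y ^ (-(1 : ℝ) / 3) := by
      rw [← Real.rpow_add_one (hd y hy)]; norm_num
    refine h2.congr_deriv ?_
    linear_combination (-(2 : ℝ) / 3 * P y * Q y) * h3
  intro x hx
  -- the full function agrees near x with the explicit function g
  have hev : (fun t => Δ t ^ (-(1 : ℝ) / 6) *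
        deriv (fun s => Q s * Δ s ^ (-(1 : ℝ) / 3)) t)
      =ᶠ[nhds x] (fun t => Δ t ^ (-(1 : ℝ) / 6) *
        (-(2 / 3) * R t * Δ t ^ (-(1 : ℝ) / 3))) := by
    filter_upwards [hIopen.mem_nhds hx] with t ht
    rw [(hμ t ht).deriv]
  -- derivative of g at x
  set d := Δ x with hdef
  have hdne : d ≠ 0 := hd x hx
  have h6 : HasDerivAt (fun t => Δ t ^ (-(1 : ℝ) / 6))
      (2 * P x * d * (-(1 : ℝ) / 6) * d ^ ((-(1 : ℝ) / 6) - 1)) x :=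
    (hΔ x hx).rpow_const (Or.inl hdne)
  have h1 : HasDerivAt (fun s => Δ s ^ (-(1 : ℝ) / 3))
      (2 * P x * d * (-(1 : ℝ) / 3) * d ^ ((-(1 : ℝ) / 3) - 1)) x :=
    (hΔ x hx).rpow_const (Or.inl hdne)
  have hRfac : HasDerivAt (fun t => -(2 / 3 : ℝ) * R t * Δ t ^ (-(1 : ℝ) / 3))
      ((-(2 / 3 : ℝ) * (P x * R x + (k ^ 2 / (36 - k ^ 2)) * Q x ^ 2)) * d ^ (-(1 : ℝ) / 3)
        + (-(2 / 3 : ℝ) * R x) * (2 * P x * d * (-(1 : ℝ) / 3) * d ^ ((-(1 : ℝ) / 3) - 1))) x := by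
    have := (((hR x hx).const_mul (-(2 / 3 : ℝ))).mul h1)
    exact this
  have hg : HasDerivAt (fun t => Δ t ^ (-(1 : ℝ) / 6) *
        (-(2 / 3) * R t * Δ t ^ (-(1 : ℝ) / 3)))
      ((2 * P x * d * (-(1 : ℝ) / 6) * d ^ ((-(1 : ℝ) / 6) - 1)) *
          (-(2 / 3) * R x * d ^ (-(1 : ℝ) / 3))
        + d ^ (-(1 : ℝ) / 6) *
          ((-(2 / 3 : ℝ) * (P x * R x + (k ^ 2 / (36 - k ^ 2)) * Q x ^ 2)) * d ^ (-(1 : ℝ) / 3)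
            + (-(2 / 3 : ℝ) * R x) * (2 * P x * d * (-(1 : ℝ) / 3) * d ^ ((-(1 : ℝ) / 3) - 1)))) x :=
    h6.mul hRfac
  rw [hev.deriv_eq, hg.deriv]
  -- rpow facts
  have f3 : d ^ ((-(1 : ℝ) / 3) - 1) * d = d ^ (-(1 : ℝ) / 3) := by
    rw [← Real.rpow_add_one hdne]; norm_num
  have f6 : d ^ ((-(1 : ℝ) / 6) - 1) * d = d ^ (-(1 : ℝ) / 6) := by
    rw [← Real.rpow_add_one hdne]; norm_num
  have f66 : d ^ (-(1 : ℝ) / 6) * d ^ (-(1 : ℝ) / 6) = d ^ (-(1 : ℝ) / 3) := by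
    rw [← Real.rpow_add (show 0 < d from hΔpos x hx)]; norm_num
  have hβ : k ^ 2 / (36 - k ^ 2) = -(k ^ 2 / (k ^ 2 - 36)) := by
    rw [show (36 : ℝ) - k ^ 2 = -(k ^ 2 - 36) by ring, div_neg]
  rw [hβ]
  set A := d ^ (-(1 : ℝ) / 3)
  set B := d ^ (-(1 : ℝ) / 6)
  set α := k ^ 2 / (k ^ 2 - 36)
  linear_combination ((4 : ℝ) / 9 * P x * R x * B ^ 2) * f3
    + ((2 : ℝ) / 9 * P x * R x * A * B) * f6
    + ((2 : ℝ) / 3 * α * Q x ^ 2 * A) * f66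
end

section
/- Let I ⊆ ℝ be an open interval, let P : I → ℝ be three times differentiable, and let H : I → ℝ be six times differentiable with H'' > 0 and H''' = (2/3)·P·H'' on I (i.e. H'' = e^{(2/3)∫P dx}). Then H satisfies Noth's equation 10(H'')³H⁽⁶⁾ − 70(H'')²H'''H⁽⁵⁾ − 49(H'')²(H'''')² + 280H''(H''')²H'''' − 175(H''')⁴ = 0 on I if and only if P satisfies the generalised Chazy equation with parameter k = 3/2, namely P''' − 2PP'' + 3(P')² − (4/(36 − (3/2)²))(6P' − P²)² = 0, on I. -/
/-- With `H'' > 0` and `H''' = (2/3)·P·H''` (i.e. `H'' = e^{(2/3)∫P dx}`),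
`H` satisfies Noth's equation
`10(H'')³H⁽⁶⁾ − 70(H'')²H'''H⁽⁵⁾ − 49(H'')²(H'''')² + 280H''(H''')²H'''' − 175(H''')⁴ = 0`
on the open interval `I` iff `P` satisfies the generalised Chazy equation with
parameter `k = 3/2` on `I`. -/
theorem noth_iff_generalized_chazy_three_halves
    (I : Set ℝ) (hIopen : IsOpen I) (hIint : I.OrdConnected)
    (P H : ℝ → ℝ)
    (hP : ∀ i < 3, ∀ x ∈ I, DifferentiableAt ℝ (iteratedDeriv i P) x)
    (hH : ∀ i < 6, ∀ x ∈ I, DifferentiableAt ℝ (iteratedDeriv i H) x)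
    (hpos : ∀ x ∈ I, 0 < iteratedDeriv 2 H x)
    (hexp : ∀ x ∈ I, iteratedDeriv 3 H x = (2 / 3) * P x * iteratedDeriv 2 H x) :
    (∀ x ∈ I,
        10 * (iteratedDeriv 2 H x) ^ 3 * iteratedDeriv 6 H x
          - 70 * (iteratedDeriv 2 H x) ^ 2 * iteratedDeriv 3 H x * iteratedDeriv 5 H x
          - 49 * (iteratedDeriv 2 H x) ^ 2 * (iteratedDeriv 4 H x) ^ 2
          + 280 * iteratedDeriv 2 H x * (iteratedDeriv 3 H x) ^ 2 * iteratedDeriv 4 H x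
          - 175 * (iteratedDeriv 3 H x) ^ 4 = 0)
    ↔
    (∀ x ∈ I,
        iteratedDeriv 3 P x - 2 * P x * iteratedDeriv 2 P x + 3 * (iteratedDeriv 1 P x) ^ 2
          - (4 / (36 - (3 / 2 : ℝ) ^ 2)) * (6 * iteratedDeriv 1 P x - P x ^ 2) ^ 2 = 0) := by
  have hP0 : ∀ x ∈ I, HasDerivAt P (iteratedDeriv 1 P x) x := by
    intro x hx
    have h := ((by simpa [iteratedDeriv_zero] using hP 0 (by norm_num) x hx :
      DifferentiableAt ℝ P x)).hasDerivAt
    simpa [iteratedDeriv_one] using h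
  have hP1 : ∀ x ∈ I, HasDerivAt (iteratedDeriv 1 P) (iteratedDeriv 2 P x) x := by
    intro x hx
    have h := (hP 1 (by norm_num) x hx).hasDerivAt
    rwa [show iteratedDeriv 2 P = deriv (iteratedDeriv 1 P) from iteratedDeriv_succ]
  have hP2 : ∀ x ∈ I, HasDerivAt (iteratedDeriv 2 P) (iteratedDeriv 3 P x) x := by
    intro x hx
    have h := (hP 2 (by norm_num) x hx).hasDerivAt
    rwa [show iteratedDeriv 3 P = deriv (iteratedDeriv 2 P) from iteratedDeriv_succ]
  have hu : ∀ x ∈ I, HasDerivAt (iteratedDeriv 2 H) (iteratedDeriv 3 H x) x := by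
    intro x hx
    have h := (hH 2 (by norm_num) x hx).hasDerivAt
    rwa [show iteratedDeriv 3 H = deriv (iteratedDeriv 2 H) from iteratedDeriv_succ]
  -- step 4
  have e4 : ∀ x ∈ I, iteratedDeriv 4 H x =
      2/3 * iteratedDeriv 1 P x * iteratedDeriv 2 H x
        + 4/9 * P x ^ 2 * iteratedDeriv 2 H x := by
    intro x hx
    have hD : HasDerivAt (fun y => 2/3 * (P y * iteratedDeriv 2 H y))
        (2/3 * (iteratedDeriv 1 P x * iteratedDeriv 2 H x + P x * iteratedDeriv 3 H x)) x :=
      ((hP0 x hx).mul (hu x hx)).const_mul (2/3)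
    have heq : iteratedDeriv 3 H =ᶠ[nhds x] fun y => 2/3 * (P y * iteratedDeriv 2 H y) :=
      Filter.eventuallyEq_of_mem (hIopen.mem_nhds hx) (fun y hy => by rw [hexp y hy]; ring)
    have hD' := hD.congr_of_eventuallyEq heq
    have h4 : iteratedDeriv 4 H x
        = 2/3 * (iteratedDeriv 1 P x * iteratedDeriv 2 H x + P x * iteratedDeriv 3 H x) := by
      rw [show iteratedDeriv 4 H = deriv (iteratedDeriv 3 H) from iteratedDeriv_succ]
      exact hD'.deriv
    rw [h4, hexp x hx]; ring
  -- step 5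
  have e5 : ∀ x ∈ I, iteratedDeriv 5 H x =
      2/3 * iteratedDeriv 2 P x * iteratedDeriv 2 H x
        + 4/3 * P x * iteratedDeriv 1 P x * iteratedDeriv 2 H x
        + 8/27 * P x ^ 3 * iteratedDeriv 2 H x := by
    intro x hx
    have hD : HasDerivAt
        (fun y => 2/3 * (iteratedDeriv 1 P y * iteratedDeriv 2 H y)
          + 4/9 * (P y ^ 2 * iteratedDeriv 2 H y))
        (2/3 * (iteratedDeriv 2 P x * iteratedDeriv 2 H x
            + iteratedDeriv 1 P x * iteratedDeriv 3 H x)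
          + 4/9 * ((2 * P x ^ 1 * iteratedDeriv 1 P x) * iteratedDeriv 2 H x
            + P x ^ 2 * iteratedDeriv 3 H x)) x :=
      (((hP1 x hx).mul (hu x hx)).const_mul (2/3)).add
        ((((hP0 x hx).pow 2).mul (hu x hx)).const_mul (4/9))
    have heq : iteratedDeriv 4 H =ᶠ[nhds x] fun y =>
        2/3 * (iteratedDeriv 1 P y * iteratedDeriv 2 H y)
          + 4/9 * (P y ^ 2 * iteratedDeriv 2 H y) :=
      Filter.eventuallyEq_of_mem (hIopen.mem_nhds hx) (fun y hy => by rw [e4 y hy]; ring)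
    have hD' := hD.congr_of_eventuallyEq heq
    rw [show iteratedDeriv 5 H = deriv (iteratedDeriv 4 H) from iteratedDeriv_succ,
      hD'.deriv, hexp x hx]; ring
  -- step 6
  have e6 : ∀ x ∈ I, iteratedDeriv 6 H x =
      2/3 * iteratedDeriv 3 P x * iteratedDeriv 2 H x
        + 16/9 * P x * iteratedDeriv 2 P x * iteratedDeriv 2 H x
        + 4/3 * iteratedDeriv 1 P x ^ 2 * iteratedDeriv 2 H x
        + 16/9 * P x ^ 2 * iteratedDeriv 1 P x * iteratedDeriv 2 H x
        + 16/81 * P x ^ 4 * iteratedDeriv 2 H x := by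
    intro x hx
    have hD : HasDerivAt
        (fun y => 2/3 * (iteratedDeriv 2 P y * iteratedDeriv 2 H y)
          + 4/3 * (P y * iteratedDeriv 1 P y * iteratedDeriv 2 H y)
          + 8/27 * (P y ^ 3 * iteratedDeriv 2 H y))
        (2/3 * (iteratedDeriv 3 P x * iteratedDeriv 2 H x
            + iteratedDeriv 2 P x * iteratedDeriv 3 H x)
          + 4/3 * ((iteratedDeriv 1 P x * iteratedDeriv 1 P x
              + P x * iteratedDeriv 2 P x) * iteratedDeriv 2 H x
            + P x * iteratedDeriv 1 P x * iteratedDeriv 3 H x)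
          + 8/27 * ((3 * P x ^ 2 * iteratedDeriv 1 P x) * iteratedDeriv 2 H x
            + P x ^ 3 * iteratedDeriv 3 H x)) x :=
      ((((hP2 x hx).mul (hu x hx)).const_mul (2/3)).add
        ((((((hP0 x hx).mul (hP1 x hx))).mul (hu x hx)).const_mul (4/3)))).add
        ((((hP0 x hx).pow 3).mul (hu x hx)).const_mul (8/27))
    have heq : iteratedDeriv 5 H =ᶠ[nhds x] fun y =>
        2/3 * (iteratedDeriv 2 P y * iteratedDeriv 2 H y)
          + 4/3 * (P y * iteratedDeriv 1 P y * iteratedDeriv 2 H y)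
          + 8/27 * (P y ^ 3 * iteratedDeriv 2 H y) :=
      Filter.eventuallyEq_of_mem (hIopen.mem_nhds hx) (fun y hy => by rw [e5 y hy]; ring)
    have hD' := hD.congr_of_eventuallyEq heq
    rw [show iteratedDeriv 6 H = deriv (iteratedDeriv 5 H) from iteratedDeriv_succ,
      hD'.deriv, hexp x hx]; ring
  -- the key algebraic identity
  have key : ∀ x ∈ I,
      10 * (iteratedDeriv 2 H x) ^ 3 * iteratedDeriv 6 H x
          - 70 * (iteratedDeriv 2 H x) ^ 2 * iteratedDeriv 3 H x * iteratedDeriv 5 H x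
          - 49 * (iteratedDeriv 2 H x) ^ 2 * (iteratedDeriv 4 H x) ^ 2
          + 280 * iteratedDeriv 2 H x * (iteratedDeriv 3 H x) ^ 2 * iteratedDeriv 4 H x
          - 175 * (iteratedDeriv 3 H x) ^ 4
        = 20/3 * (iteratedDeriv 2 H x) ^ 4
            * (iteratedDeriv 3 P x - 2 * P x * iteratedDeriv 2 P x
              + 3 * (iteratedDeriv 1 P x) ^ 2
              - (4 / (36 - (3 / 2 : ℝ) ^ 2)) * (6 * iteratedDeriv 1 P x - P x ^ 2) ^ 2) := by
    intro x hx
    rw [e6 x hx, e5 x hx, e4 x hx, hexp x hx]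
    ring
  constructor
  · intro h x hx
    have hk := key x hx
    rw [h x hx] at hk
    rw [mul_assoc] at hk
    rcases mul_eq_zero.mp hk.symm with h' | h'
    · norm_num at h'
    · rcases mul_eq_zero.mp h' with h'' | h''
      · exact absurd h'' (pow_ne_zero 4 (ne_of_gt (hpos x hx)))
      · exact h''
  · intro h x hx
    rw [key x hx, h x hx, mul_zero]
end

section
/- Let I ⊆ ℝ be an open interval, let P : I → ℝ be three times differentiable, and let F : I → ℝ be six times differentiable with F'' > 0 and F''' = (1/2)·P·F'' on I (i.e. F'' = e^{(1/2)∫P dx}). Then F satisfies the dual of Noth's equation 10(F'')³F⁽⁶⁾ − 80(F'')²F'''F⁽⁵⁾ − 51(F'')²(F'''')² + 336F''(F''')²F'''' − 224(F''')⁴ = 0 on I if and only if P satisfies the generalised Chazy equation with parameter k = 2/3, namely P''' − 2PP'' + 3(P')² − (4/(36 − (2/3)²))(6P' − P²)² = 0, on I. -/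
/-- With `F'' > 0` and `F''' = (1/2)·P·F''` (i.e. `F'' = e^{(1/2)∫P dx}`),
`F` satisfies the dual of Noth's equation
`10(F'')³F⁽⁶⁾ − 80(F'')²F'''F⁽⁵⁾ − 51(F'')²(F'''')² + 336F''(F''')²F'''' − 224(F''')⁴ = 0`
on the open interval `I` iff `P` satisfies the generalised Chazy equation with
parameter `k = 2/3` on `I`. -/
theorem dual_noth_iff_generalized_chazy_two_thirds
    (I : Set ℝ) (hIopen : IsOpen I) (hIint : I.OrdConnected)
    (P F : ℝ → ℝ)
    (hP : ∀ i < 3, ∀ x ∈ I, DifferentiableAt ℝ (iteratedDeriv i P) x)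
    (hF : ∀ i < 6, ∀ x ∈ I, DifferentiableAt ℝ (iteratedDeriv i F) x)
    (hpos : ∀ x ∈ I, 0 < iteratedDeriv 2 F x)
    (hexp : ∀ x ∈ I, iteratedDeriv 3 F x = (1 / 2) * P x * iteratedDeriv 2 F x) :
    (∀ x ∈ I,
        10 * (iteratedDeriv 2 F x) ^ 3 * iteratedDeriv 6 F x
          - 80 * (iteratedDeriv 2 F x) ^ 2 * iteratedDeriv 3 F x * iteratedDeriv 5 F x
          - 51 * (iteratedDeriv 2 F x) ^ 2 * (iteratedDeriv 4 F x) ^ 2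
          + 336 * iteratedDeriv 2 F x * (iteratedDeriv 3 F x) ^ 2 * iteratedDeriv 4 F x
          - 224 * (iteratedDeriv 3 F x) ^ 4 = 0)
    ↔
    (∀ x ∈ I,
        iteratedDeriv 3 P x - 2 * P x * iteratedDeriv 2 P x + 3 * (iteratedDeriv 1 P x) ^ 2
          - (4 / (36 - (2 / 3 : ℝ) ^ 2)) * (6 * iteratedDeriv 1 P x - P x ^ 2) ^ 2 = 0) := by
  have hI : ∀ x ∈ I, I ∈ nhds x := fun x hx => hIopen.mem_nhds hx
  have hP0 : ∀ x ∈ I, DifferentiableAt ℝ P x := by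
    intro x hx
    have := hP 0 (by norm_num) x hx
    simpa [iteratedDeriv_zero] using this
  have hP1 : ∀ x ∈ I, DifferentiableAt ℝ (deriv P) x := by
    intro x hx
    have := hP 1 (by norm_num) x hx
    simpa [iteratedDeriv_one] using this
  have hP2 : ∀ x ∈ I, DifferentiableAt ℝ (deriv (deriv P)) x := by
    intro x hx
    have := hP 2 (by norm_num) x hx
    simpa [iteratedDeriv_succ, iteratedDeriv_one] using this
  have hF2 : ∀ x ∈ I, DifferentiableAt ℝ (iteratedDeriv 2 F) x := fun x hx =>
    hF 2 (by norm_num) x hx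
  have hG : ∀ x ∈ I, HasDerivAt (iteratedDeriv 2 F) (1 / 2 * P x * iteratedDeriv 2 F x) x := by
    intro x hx
    have h32 : iteratedDeriv 3 F = deriv (iteratedDeriv 2 F) := iteratedDeriv_succ
    have := (hF2 x hx).hasDerivAt
    rw [← h32, hexp x hx] at this
    exact this
  -- fourth derivative
  have h4 : ∀ x ∈ I, iteratedDeriv 4 F x
      = (1 / 2 * deriv P x + 1 / 4 * P x ^ 2) * iteratedDeriv 2 F x := by
    intro x hx
    have hev : iteratedDeriv 3 F =ᶠ[nhds x] fun y => 1 / 2 * P y * iteratedDeriv 2 F y :=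
      Filter.eventuallyEq_of_mem (hI x hx) (fun y hy => hexp y hy)
    have hd : HasDerivAt (fun y => 1 / 2 * P y * iteratedDeriv 2 F y)
        ((1 / 2 * deriv P x) * iteratedDeriv 2 F x
          + (1 / 2 * P x) * (1 / 2 * P x * iteratedDeriv 2 F x)) x :=
      (((hP0 x hx).hasDerivAt).const_mul (1 / 2 : ℝ)).mul (hG x hx)
    have h43 : iteratedDeriv 4 F = deriv (iteratedDeriv 3 F) := iteratedDeriv_succ
    rw [h43, hev.deriv_eq, hd.deriv]
    ring
  -- fifth derivative
  have h5 : ∀ x ∈ I, iteratedDeriv 5 F x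
      = (1 / 2 * deriv (deriv P) x + 3 / 4 * P x * deriv P x + 1 / 8 * P x ^ 3)
          * iteratedDeriv 2 F x := by
    intro x hx
    have hev : iteratedDeriv 4 F =ᶠ[nhds x]
        fun y => (1 / 2 * deriv P y + 1 / 4 * P y ^ 2) * iteratedDeriv 2 F y :=
      Filter.eventuallyEq_of_mem (hI x hx) (fun y hy => h4 y hy)
    have hA : HasDerivAt (fun y => 1 / 2 * deriv P y + 1 / 4 * P y ^ 2)
        (1 / 2 * deriv (deriv P) x + 1 / 4 * (2 * P x ^ 1 * deriv P x)) x :=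
      (((hP1 x hx).hasDerivAt).const_mul (1 / 2 : ℝ)).add
        ((((hP0 x hx).hasDerivAt).pow 2).const_mul (1 / 4 : ℝ))
    have hd : HasDerivAt (fun y => (1 / 2 * deriv P y + 1 / 4 * P y ^ 2) * iteratedDeriv 2 F y) _ x :=
      hA.mul (hG x hx)
    have h54 : iteratedDeriv 5 F = deriv (iteratedDeriv 4 F) := iteratedDeriv_succ
    rw [h54, hev.deriv_eq, hd.deriv]
    ring
  -- sixth derivative
  have h6 : ∀ x ∈ I, iteratedDeriv 6 F x
      = (1 / 2 * deriv (deriv (deriv P)) x + P x * deriv (deriv P) x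
          + 3 / 4 * (deriv P x) ^ 2 + 3 / 4 * P x ^ 2 * deriv P x + 1 / 16 * P x ^ 4)
          * iteratedDeriv 2 F x := by
    intro x hx
    have hev : iteratedDeriv 5 F =ᶠ[nhds x]
        fun y => (1 / 2 * deriv (deriv P) y + 3 / 4 * P y * deriv P y + 1 / 8 * P y ^ 3)
          * iteratedDeriv 2 F y :=
      Filter.eventuallyEq_of_mem (hI x hx) (fun y hy => h5 y hy)
    have hA : HasDerivAt
        (fun y => 1 / 2 * deriv (deriv P) y + 3 / 4 * P y * deriv P y + 1 / 8 * P y ^ 3)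
        (1 / 2 * deriv (deriv (deriv P)) x
          + (3 / 4 * ((deriv P x * deriv P x) + P x * deriv (deriv P) x))
          + 1 / 8 * (3 * P x ^ 2 * deriv P x)) x := by
      have h1 : HasDerivAt (fun y => 1 / 2 * deriv (deriv P) y)
          (1 / 2 * deriv (deriv (deriv P)) x) x :=
        ((hP2 x hx).hasDerivAt).const_mul (1 / 2 : ℝ)
      have h2 : HasDerivAt (fun y => 3 / 4 * (P y * deriv P y))
          (3 / 4 * ((deriv P x * deriv P x) + P x * deriv (deriv P) x)) x :=
        (((hP0 x hx).hasDerivAt).mul ((hP1 x hx).hasDerivAt)).const_mul (3 / 4 : ℝ)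
      have h3 : HasDerivAt (fun y => 1 / 8 * P y ^ 3)
          (1 / 8 * (3 * P x ^ 2 * deriv P x)) x := by
        have := (((hP0 x hx).hasDerivAt).pow 3).const_mul (1 / 8 : ℝ)
        simpa using this
      have : HasDerivAt (fun y => 1 / 2 * deriv (deriv P) y + 3 / 4 * (P y * deriv P y)
          + 1 / 8 * P y ^ 3) _ x := (h1.add h2).add h3
      simpa [mul_assoc, mul_comm, mul_left_comm, add_assoc] using this
    have hd : HasDerivAt (fun y => (1 / 2 * deriv (deriv P) y + 3 / 4 * P y * deriv P y
        + 1 / 8 * P y ^ 3) * iteratedDeriv 2 F y) _ x := hA.mul (hG x hx)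
    have h65 : iteratedDeriv 6 F = deriv (iteratedDeriv 5 F) := iteratedDeriv_succ
    rw [h65, hev.deriv_eq, hd.deriv]
    ring
  -- key algebraic identity
  have key : ∀ x ∈ I,
      10 * (iteratedDeriv 2 F x) ^ 3 * iteratedDeriv 6 F x
        - 80 * (iteratedDeriv 2 F x) ^ 2 * iteratedDeriv 3 F x * iteratedDeriv 5 F x
        - 51 * (iteratedDeriv 2 F x) ^ 2 * (iteratedDeriv 4 F x) ^ 2
        + 336 * iteratedDeriv 2 F x * (iteratedDeriv 3 F x) ^ 2 * iteratedDeriv 4 F x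
        - 224 * (iteratedDeriv 3 F x) ^ 4
      = 5 * (iteratedDeriv 2 F x) ^ 4
        * (deriv (deriv (deriv P)) x - 2 * P x * deriv (deriv P) x + 3 * (deriv P x) ^ 2
            - (9 / 80) * (6 * deriv P x - P x ^ 2) ^ 2) := by
    intro x hx
    rw [hexp x hx, h4 x hx, h5 x hx, h6 x hx]
    ring
  have hchz : ∀ x ∈ I,
      (iteratedDeriv 3 P x - 2 * P x * iteratedDeriv 2 P x + 3 * (iteratedDeriv 1 P x) ^ 2
          - (4 / (36 - (2 / 3 : ℝ) ^ 2)) * (6 * iteratedDeriv 1 P x - P x ^ 2) ^ 2)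
      = (deriv (deriv (deriv P)) x - 2 * P x * deriv (deriv P) x + 3 * (deriv P x) ^ 2
            - (9 / 80) * (6 * deriv P x - P x ^ 2) ^ 2) := by
    intro x _
    have e1 : iteratedDeriv 1 P = deriv P := iteratedDeriv_one
    have e2 : iteratedDeriv 2 P = deriv (deriv P) := by
      simp [iteratedDeriv_succ, iteratedDeriv_one]
    have e3 : iteratedDeriv 3 P = deriv (deriv (deriv P)) := by
      simp [iteratedDeriv_succ, iteratedDeriv_one]
    rw [e1, e2, e3]
    norm_num
  constructor
  · intro h x hx
    have hk := key x hx
    rw [h x hx] at hk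
    have hu : (0 : ℝ) < iteratedDeriv 2 F x := hpos x hx
    have h5u : 5 * (iteratedDeriv 2 F x) ^ 4 ≠ 0 := by positivity
    have hC := (mul_eq_zero.mp hk.symm).resolve_left h5u
    rw [hchz x hx]
    exact hC
  · intro h x hx
    have hk := key x hx
    have hC := h x hx
    rw [hchz x hx] at hC
    rw [hk, hC, mul_zero]
end

section
/- Let I ⊆ ℝ be an open interval, let P : I → ℝ be differentiable, set Q = P² − 6P', let ρ : I → ℝ be twice differentiable and nowhere vanishing, and let E : I → ℝ be a positive differentiable function with E' = −(1/3)·P·E (i.e. E = e^{−(1/3)∫P dx}). Define Ω = E/ρ. Then Ω satisfies the Ricci-flatness equation Ω''Ω − 2(Ω')² − (2/3)PΩΩ' − (1/18)P²Ω² − (1/30)QΩ² = 0 on I if and only if ρ satisfies ρ'' − (1/45)·Q·ρ = 0 on I. -/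
/-- With `Q = P² − 6P'`, `ρ` twice differentiable and nowhere vanishing on `I`,
`E > 0` with `E' = −(1/3)·P·E` (i.e. `E = e^{−(1/3)∫P dx}`) and `Ω = E/ρ`, the conformal
factor `Ω` satisfies the Ricci-flatness equation
`Ω''Ω − 2(Ω')² − (2/3)PΩΩ' − (1/18)P²Ω² − (1/30)QΩ² = 0` on `I`
iff `ρ` satisfies `ρ'' − (1/45)·Q·ρ = 0` on `I`. -/
theorem ricci_flat_factor_iff_rho_ode
    (I : Set ℝ) (hIopen : IsOpen I) (hIint : I.OrdConnected)
    (P ρ E : ℝ → ℝ)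
    (hP : ∀ x ∈ I, DifferentiableAt ℝ P x)
    (hρ : ∀ x ∈ I, DifferentiableAt ℝ ρ x ∧ DifferentiableAt ℝ (deriv ρ) x)
    (hρ0 : ∀ x ∈ I, ρ x ≠ 0)
    (hEpos : ∀ x ∈ I, 0 < E x)
    (hE : ∀ x ∈ I, HasDerivAt E (-(1 / 3) * P x * E x) x) :
    (∀ x ∈ I,
        deriv (deriv (fun t => E t / ρ t)) x * (E x / ρ x)
          - 2 * (deriv (fun t => E t / ρ t) x) ^ 2
          - (2 / 3) * P x * (E x / ρ x) * deriv (fun t => E t / ρ t) x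
          - (1 / 18) * P x ^ 2 * (E x / ρ x) ^ 2
          - (1 / 30) * (P x ^ 2 - 6 * deriv P x) * (E x / ρ x) ^ 2 = 0)
    ↔
    (∀ x ∈ I, deriv (deriv ρ) x - (1 / 45) * (P x ^ 2 - 6 * deriv P x) * ρ x = 0) := by
  set g : ℝ → ℝ := fun y =>
    (-(1 / 3) * P y * E y * ρ y - E y * deriv ρ y) / ρ y ^ 2 with hg_def
  have hΩ' : ∀ y ∈ I, HasDerivAt (fun t => E t / ρ t) (g y) y := by
    intro y hy
    exact (hE y hy).div ((hρ y hy).1.hasDerivAt) (hρ0 y hy)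
  have key : ∀ x ∈ I,
      deriv (deriv (fun t => E t / ρ t)) x * (E x / ρ x)
          - 2 * (deriv (fun t => E t / ρ t) x) ^ 2
          - (2 / 3) * P x * (E x / ρ x) * deriv (fun t => E t / ρ t) x
          - (1 / 18) * P x ^ 2 * (E x / ρ x) ^ 2
          - (1 / 30) * (P x ^ 2 - 6 * deriv P x) * (E x / ρ x) ^ 2
        = -(E x ^ 2 / ρ x ^ 3) *
            (deriv (deriv ρ) x - (1 / 45) * (P x ^ 2 - 6 * deriv P x) * ρ x) := by
    intro x hx
    have hρx : HasDerivAt ρ (deriv ρ x) x := (hρ x hx).1.hasDerivAt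
    have hρ'x : HasDerivAt (deriv ρ) (deriv (deriv ρ) x) x := (hρ x hx).2.hasDerivAt
    have hPx : HasDerivAt P (deriv P x) x := (hP x hx).hasDerivAt
    have hA : HasDerivAt (fun y => -(1 / 3) * P y) (-(1 / 3) * deriv P x) x :=
      hPx.const_mul (-(1 / 3))
    have hB := hA.mul (hE x hx)
    have hC := hB.mul hρx
    have hD := (hE x hx).mul hρ'x
    have hN := hC.sub hD
    have hDen := hρx.pow 2
    have hρ2 : ρ x ^ 2 ≠ 0 := pow_ne_zero 2 (hρ0 x hx)
    have hg : HasDerivAt g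
        (((( -(1 / 3) * deriv P x * E x + -(1 / 3) * P x * (-(1 / 3) * P x * E x)) * ρ x
              + -(1 / 3) * P x * E x * deriv ρ x
            - (-(1 / 3) * P x * E x * deriv ρ x + E x * deriv (deriv ρ) x)) * ρ x ^ 2
          - (-(1 / 3) * P x * E x * ρ x - E x * deriv ρ x) * (2 * ρ x ^ 1 * deriv ρ x))
          / (ρ x ^ 2) ^ 2) x := hN.div hDen hρ2
    have hderiv1 : deriv (fun t => E t / ρ t) x = g x := (hΩ' x hx).deriv
    have hEq : deriv (fun t => E t / ρ t) =ᶠ[nhds x] g := by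
      filter_upwards [hIopen.mem_nhds hx] with y hy
      exact (hΩ' y hy).deriv
    have hderiv2 : deriv (deriv (fun t => E t / ρ t)) x
        = (((( -(1 / 3) * deriv P x * E x + -(1 / 3) * P x * (-(1 / 3) * P x * E x)) * ρ x
              + -(1 / 3) * P x * E x * deriv ρ x
            - (-(1 / 3) * P x * E x * deriv ρ x + E x * deriv (deriv ρ) x)) * ρ x ^ 2
          - (-(1 / 3) * P x * E x * ρ x - E x * deriv ρ x) * (2 * ρ x ^ 1 * deriv ρ x))
          / (ρ x ^ 2) ^ 2) := by
      rw [hEq.deriv_eq]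
      exact hg.deriv
    rw [hderiv1, hderiv2, hg_def]
    have h0 := hρ0 x hx
    field_simp
    ring
  constructor
  · intro h x hx
    have hk := key x hx
    rw [h x hx] at hk
    have hne : -(E x ^ 2 / ρ x ^ 3) ≠ 0 := by
      have := (hEpos x hx).ne'
      have h0 := hρ0 x hx
      simp [div_eq_zero_iff, pow_eq_zero_iff, this, h0]
    exact (mul_eq_zero.mp hk.symm).resolve_left hne
  · intro h x hx
    rw [key x hx, h x hx, mul_zero]
end

section
/- Let I ⊆ ℝ be an open interval, let P : I → ℝ be differentiable, set Q = P² − 6P', and let η : I → ℝ be twice differentiable and nowhere vanishing. Define Ω = 1/η. Then Ω satisfies the Ricci-flatness equation 40Ω''Ω − 80(Ω')² − 6Ω²P' + Ω²P² = 0 on I if and only if η satisfies η'' − (1/40)·Q·η = 0 on I. -/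
/-- With `Q = P² − 6P'`, `η` twice differentiable and nowhere vanishing on `I`,
and `Ω = 1/η`, the conformal factor `Ω` satisfies the Ricci-flatness equation
`40Ω''Ω − 80(Ω')² − 6Ω²P' + Ω²P² = 0` on `I` iff `η` satisfies
`η'' − (1/40)·Q·η = 0` on `I`. -/
theorem ricci_flat_factor_iff_eta_ode
    (I : Set ℝ) (hIopen : IsOpen I) (hIint : I.OrdConnected)
    (P η : ℝ → ℝ)
    (hP : ∀ x ∈ I, DifferentiableAt ℝ P x)
    (hη : ∀ x ∈ I, DifferentiableAt ℝ η x ∧ DifferentiableAt ℝ (deriv η) x)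
    (hη0 : ∀ x ∈ I, η x ≠ 0) :
    (∀ x ∈ I,
        40 * deriv (deriv (fun t => 1 / η t)) x * (1 / η x)
          - 80 * (deriv (fun t => 1 / η t) x) ^ 2
          - 6 * (1 / η x) ^ 2 * deriv P x
          + (1 / η x) ^ 2 * P x ^ 2 = 0)
    ↔
    (∀ x ∈ I, deriv (deriv η) x - (1 / 40) * (P x ^ 2 - 6 * deriv P x) * η x = 0) := by
  have hd1 : ∀ x ∈ I, deriv (fun t => 1 / η t) x = -deriv η x / η x ^ 2 := by
    intro x hx
    have : (fun t => 1 / η t) = fun t => (η t)⁻¹ := by funext t; simp [one_div]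
    rw [this, show (fun t => (η t)⁻¹) = η⁻¹ from rfl, deriv_inv'' (hη x hx).1 (hη0 x hx)]
  have hd2 : ∀ x ∈ I, deriv (deriv (fun t => 1 / η t)) x
      = -(deriv (deriv η) x * η x ^ 2 - deriv η x * (2 * η x * deriv η x)) / (η x ^ 2) ^ 2 := by
    intro x hx
    have hev : deriv (fun t => 1 / η t) =ᶠ[nhds x] fun t => -deriv η t / η t ^ 2 := by
      filter_upwards [hIopen.mem_nhds hx] with y hy using hd1 y hy
    rw [hev.deriv_eq]
    have hnum : DifferentiableAt ℝ (fun t => -deriv η t) x := ((hη x hx).2).neg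
    have hden : DifferentiableAt ℝ (fun t => η t ^ 2) x := ((hη x hx).1).pow 2
    rw [show (fun t => -deriv η t / η t ^ 2) = (fun t => -deriv η t) / (fun t => η t ^ 2) from rfl,
      deriv_div hnum hden (pow_ne_zero 2 (hη0 x hx))]
    simp [deriv_fun_pow (hη x hx).1 2, (hη x hx).2]
    ring
  have hident : ∀ x ∈ I,
      40 * deriv (deriv (fun t => 1 / η t)) x * (1 / η x)
        - 80 * (deriv (fun t => 1 / η t) x) ^ 2
        - 6 * (1 / η x) ^ 2 * deriv P x
        + (1 / η x) ^ 2 * P x ^ 2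
      = (-40 / η x ^ 3) *
          (deriv (deriv η) x - (1 / 40) * (P x ^ 2 - 6 * deriv P x) * η x) := by
    intro x hx
    rw [hd1 x hx, hd2 x hx]
    have he := hη0 x hx
    field_simp
    ring
  have hne : ∀ x ∈ I, (-40 : ℝ) / η x ^ 3 ≠ 0 := fun x hx =>
    div_ne_zero (by norm_num) (pow_ne_zero 3 (hη0 x hx))
  constructor
  · intro h x hx
    have := h x hx
    rw [hident x hx] at this
    exact (mul_eq_zero.mp this).resolve_left (hne x hx)
  · intro h x hx
    rw [hident x hx, h x hx, mul_zero]
end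

section
/- Let φ : ℝ⁵ → ℝ⁵ be the map φ(a₁,a₂,a₃,a₄,a₅) = (6a₁ − 2a₃a₄ + a₄²a₅, 6a₂ − 2a₃a₅ − a₄a₅², 2a₃, −a₄, a₅). Then the pullbacks of the 1-forms Θ₁, Θ₂, Θ₃ under φ satisfy φ*Θ₁ = 6θ₁ + 2a₄·θ₃, φ*Θ₂ = 6θ₂ + 2a₅·θ₃ and φ*Θ₃ = 2θ₃ at every point (a₁,...,a₅) ∈ ℝ⁵; in particular φ*Θ₁, φ*Θ₂, φ*Θ₃ lie in the pointwise span of {θ₁, θ₂, θ₃}. -/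
noncomputable section

/-- The `i`-th coordinate 1-form on ℝ⁵. -/
def co (i : Fin 5) : (Fin 5 → ℝ) →L[ℝ] ℝ := ContinuousLinearMap.proj i

/-- Flat Cartan 1-form `θ₁ = da₁ + (a₃ + (1/2)a₄a₅)da₄`. -/
def θ₁ (a : Fin 5 → ℝ) : (Fin 5 → ℝ) →L[ℝ] ℝ :=
  co 0 + (a 2 + (1 / 2) * a 3 * a 4) • co 3

/-- Flat Cartan 1-form `θ₂ = da₂ + (a₃ − (1/2)a₄a₅)da₅`. -/
def θ₂ (a : Fin 5 → ℝ) : (Fin 5 → ℝ) →L[ℝ] ℝ :=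
  co 1 + (a 2 - (1 / 2) * a 3 * a 4) • co 4

/-- Flat Cartan 1-form `θ₃ = da₃ + (1/2)a₄da₅ − (1/2)a₅da₄`. -/
def θ₃ (a : Fin 5 → ℝ) : (Fin 5 → ℝ) →L[ℝ] ℝ :=
  co 2 + ((1 / 2) * a 3) • co 4 - ((1 / 2) * a 4) • co 3

/-- `Θ₁ = dc₁ − 2c₄dc₃ − 4c₃dc₄` in coordinates `(c₁,…,c₅)`. -/
def Θ₁ (c : Fin 5 → ℝ) : (Fin 5 → ℝ) →L[ℝ] ℝ :=
  co 0 - (2 * c 3) • co 2 - (4 * c 2) • co 3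

/-- `Θ₂ = dc₂ + 2c₅dc₃ + 4c₃dc₅`. -/
def Θ₂ (c : Fin 5 → ℝ) : (Fin 5 → ℝ) →L[ℝ] ℝ :=
  co 1 + (2 * c 4) • co 2 + (4 * c 2) • co 4

/-- `Θ₃ = dc₃ + c₅dc₄ − c₄dc₅`. -/
def Θ₃ (c : Fin 5 → ℝ) : (Fin 5 → ℝ) →L[ℝ] ℝ :=
  co 2 + c 4 • co 3 - c 3 • co 4

/-- The change of coordinates
`φ(a₁,a₂,a₃,a₄,a₅) = (6a₁ − 2a₃a₄ + a₄²a₅, 6a₂ − 2a₃a₅ − a₄a₅², 2a₃, −a₄, a₅)`. -/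
def φmap : (Fin 5 → ℝ) → (Fin 5 → ℝ) :=
  fun a => ![6 * a 0 - 2 * a 2 * a 3 + (a 3) ^ 2 * a 4,
             6 * a 1 - 2 * a 2 * a 4 - a 3 * (a 4) ^ 2,
             2 * a 2, -a 3, a 4]


private def Dφ (a : Fin 5 → ℝ) : (Fin 5 → ℝ) →L[ℝ] (Fin 5 → ℝ) :=
  ContinuousLinearMap.pi
    ![(6 : ℝ) • co 0 - (2 * a 3) • co 2 + (2 * a 3 * a 4 - 2 * a 2) • co 3 + ((a 3) ^ 2) • co 4,
      (6 : ℝ) • co 1 - (2 * a 4) • co 2 - ((a 4) ^ 2) • co 3 + (-(2 * a 2) - 2 * a 3 * a 4) • co 4,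
      (2 : ℝ) • co 2, -co 3, co 4]

private lemma hasFDerivAt_φmap (a : Fin 5 → ℝ) : HasFDerivAt φmap (Dφ a) a := by
  have hp : ∀ j : Fin 5, HasFDerivAt (fun x : Fin 5 → ℝ => x j) (co j) a :=
    fun j => (ContinuousLinearMap.proj j : (Fin 5 → ℝ) →L[ℝ] ℝ).hasFDerivAt
  rw [hasFDerivAt_pi']
  intro i
  fin_cases i
  · have h := (((hp 0).const_mul 6).sub (((hp 2).const_mul 2).mul (hp 3))).add
      (((hp 3).mul (hp 3)).mul (hp 4))
    have h' := h.congr_of_eventuallyEq (Filter.Eventually.of_forall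
      (fun x : Fin 5 → ℝ => show φmap x 0 = _ by
        simp only [φmap, Matrix.cons_val_zero, Pi.add_apply, Pi.sub_apply, Pi.mul_apply, Pi.pow_apply]; ring))
    refine h'.congr_fderiv ?_
    ext v
    simp [Dφ, co, φmap]
    ring
  · have h := (((hp 1).const_mul 6).sub (((hp 2).const_mul 2).mul (hp 4))).sub
      ((hp 3).mul ((hp 4).mul (hp 4)))
    have h' := h.congr_of_eventuallyEq (Filter.Eventually.of_forall
      (fun x : Fin 5 → ℝ => show φmap x 1 = _ by
        simp only [φmap, Matrix.cons_val_one, Matrix.head_cons, Matrix.cons_val_zero, Pi.add_apply, Pi.sub_apply, Pi.mul_apply, Pi.pow_apply]; ring))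
    refine h'.congr_fderiv ?_
    ext v
    simp [Dφ, co, φmap]
    ring
  · have h := (hp 2).const_mul 2
    refine h.congr_fderiv ?_
    ext v
    simp [Dφ, co, φmap]
  · have h := (hp 3).neg
    refine h.congr_fderiv ?_
    ext v
    simp [Dφ, co, φmap]
  · refine (hp 4).congr_fderiv ?_
    ext v
    simp [Dφ, co, φmap]

/-- The pullbacks under `φ` satisfy `φ*Θ₁ = 6θ₁ + 2a₄θ₃`, `φ*Θ₂ = 6θ₂ + 2a₅θ₃`,
`φ*Θ₃ = 2θ₃`; in particular they lie in the pointwise span of `{θ₁, θ₂, θ₃}`. -/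
theorem pullback_Theta_in_span_theta :
    (∀ a : Fin 5 → ℝ,
        (Θ₁ (φmap a)).comp (fderiv ℝ φmap a) = (6 : ℝ) • θ₁ a + (2 * a 3) • θ₃ a) ∧
    (∀ a : Fin 5 → ℝ,
        (Θ₂ (φmap a)).comp (fderiv ℝ φmap a) = (6 : ℝ) • θ₂ a + (2 * a 4) • θ₃ a) ∧
    (∀ a : Fin 5 → ℝ,
        (Θ₃ (φmap a)).comp (fderiv ℝ φmap a) = (2 : ℝ) • θ₃ a) ∧
    (∀ a : Fin 5 → ℝ,
        (Θ₁ (φmap a)).comp (fderiv ℝ φmap a) ∈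
          Submodule.span ℝ ({θ₁ a, θ₂ a, θ₃ a} : Set ((Fin 5 → ℝ) →L[ℝ] ℝ)) ∧
        (Θ₂ (φmap a)).comp (fderiv ℝ φmap a) ∈
          Submodule.span ℝ ({θ₁ a, θ₂ a, θ₃ a} : Set ((Fin 5 → ℝ) →L[ℝ] ℝ)) ∧
        (Θ₃ (φmap a)).comp (fderiv ℝ φmap a) ∈
          Submodule.span ℝ ({θ₁ a, θ₂ a, θ₃ a} : Set ((Fin 5 → ℝ) →L[ℝ] ℝ))) := by
  have h1 : ∀ a : Fin 5 → ℝ,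
      (Θ₁ (φmap a)).comp (fderiv ℝ φmap a) = (6 : ℝ) • θ₁ a + (2 * a 3) • θ₃ a := by
    intro a
    rw [(hasFDerivAt_φmap a).fderiv]
    ext v
    simp [Θ₁, θ₁, θ₃, Dφ, co, φmap]
    ring
  have h2 : ∀ a : Fin 5 → ℝ,
      (Θ₂ (φmap a)).comp (fderiv ℝ φmap a) = (6 : ℝ) • θ₂ a + (2 * a 4) • θ₃ a := by
    intro a
    rw [(hasFDerivAt_φmap a).fderiv]
    ext v
    simp [Θ₂, θ₂, θ₃, Dφ, co, φmap]
    ring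
  have h3 : ∀ a : Fin 5 → ℝ,
      (Θ₃ (φmap a)).comp (fderiv ℝ φmap a) = (2 : ℝ) • θ₃ a := by
    intro a
    rw [(hasFDerivAt_φmap a).fderiv]
    ext v
    simp [Θ₃, θ₃, Dφ, co, φmap]
    ring
  refine ⟨h1, h2, h3, fun a => ?_⟩
  have m1 : θ₁ a ∈ Submodule.span ℝ ({θ₁ a, θ₂ a, θ₃ a} : Set ((Fin 5 → ℝ) →L[ℝ] ℝ)) :=
    Submodule.subset_span (by simp)
  have m2 : θ₂ a ∈ Submodule.span ℝ ({θ₁ a, θ₂ a, θ₃ a} : Set ((Fin 5 → ℝ) →L[ℝ] ℝ)) :=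
    Submodule.subset_span (by simp)
  have m3 : θ₃ a ∈ Submodule.span ℝ ({θ₁ a, θ₂ a, θ₃ a} : Set ((Fin 5 → ℝ) →L[ℝ] ℝ)) :=
    Submodule.subset_span (by simp)
  refine ⟨?_, ?_, ?_⟩
  · rw [h1 a]
    exact Submodule.add_mem _ (Submodule.smul_mem _ _ m1) (Submodule.smul_mem _ _ m3)
  · rw [h2 a]
    exact Submodule.add_mem _ (Submodule.smul_mem _ _ m2) (Submodule.smul_mem _ _ m3)
  · rw [h3 a]
    exact Submodule.smul_mem _ _ m3


end
end

section
/- Let α, β ∈ ℝ and let I ⊆ ℝ be an open interval on which r³ + 1 > 0. Then the function Φ(r) = (α(2r³ − 1) + βr(r³ − 2))·(r³ + 1)^{−4/3} satisfies the algebraic form of the spin 4 equianharmonic Lamé equation (r³ + 1)²Φ'' + 2r²(r³ + 1)Φ' + 20rΦ = 0 on I. Likewise, for γ, δ ∈ ℝ, the function Ψ(r) = (δr + γ)·(r³ + 1)^{−1/3} satisfies the algebraic form of the spin 1 equianharmonic Lamé equation (r³ + 1)²Ψ'' + 2r²(r³ + 1)Ψ' + 2rΨ = 0 on I. -/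
private lemma polyD (a0 a1 a2 a3 a4 a5 a6 r : ℝ) :
    HasDerivAt (fun t : ℝ => a0 + a1*t + a2*t^2 + a3*t^3 + a4*t^4 + a5*t^5 + a6*t^6)
      (a1 + 2*a2*r + 3*a3*r^2 + 4*a4*r^3 + 5*a5*r^4 + 6*a6*r^5) r := by
  have h : HasDerivAt (fun t : ℝ => a0 + a1*t + a2*t^2 + a3*t^3 + a4*t^4 + a5*t^5 + a6*t^6)
      (0 + a1*1 + a2*(((2:ℕ):ℝ)*r^1) + a3*(((3:ℕ):ℝ)*r^2) + a4*(((4:ℕ):ℝ)*r^3)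
        + a5*(((5:ℕ):ℝ)*r^4) + a6*(((6:ℕ):ℝ)*r^5)) r :=
    ((((((hasDerivAt_const r a0).add ((hasDerivAt_id r).const_mul a1)).add
      ((hasDerivAt_pow 2 r).const_mul a2)).add ((hasDerivAt_pow 3 r).const_mul a3)).add
      ((hasDerivAt_pow 4 r).const_mul a4)).add ((hasDerivAt_pow 5 r).const_mul a5)).add
      ((hasDerivAt_pow 6 r).const_mul a6)
  have e : (0 + a1*1 + a2*(((2:ℕ):ℝ)*r^1) + a3*(((3:ℕ):ℝ)*r^2) + a4*(((4:ℕ):ℝ)*r^3)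
        + a5*(((5:ℕ):ℝ)*r^4) + a6*(((6:ℕ):ℝ)*r^5))
      = (a1 + 2*a2*r + 3*a3*r^2 + 4*a4*r^3 + 5*a5*r^4 + 6*a6*r^5) := by
    push_cast; ring
  exact e ▸ h

private lemma rpowD (p r : ℝ) (h : 0 < r^3+1) :
    HasDerivAt (fun t : ℝ => (t^3+1)^p) (3*r^2*p*(r^3+1)^(p-1)) r := by
  have h1 : HasDerivAt (fun t : ℝ => t^3+1) (3*r^2) r := by
    have := (hasDerivAt_pow 3 r).add_const 1
    have e : ((3:ℕ):ℝ) * r ^ (3-1) = 3*r^2 := by push_cast; ring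
    exact e ▸ this
  exact h1.rpow_const (Or.inl h.ne')

private lemma prodD (a0 a1 a2 a3 a4 a5 a6 p r : ℝ) (h : 0 < r^3+1) :
    HasDerivAt (fun t : ℝ =>
        (a0 + a1*t + a2*t^2 + a3*t^3 + a4*t^4 + a5*t^5 + a6*t^6) * (t^3+1)^p)
      ((a1 + 2*a2*r + 3*a3*r^2 + 4*a4*r^3 + 5*a5*r^4 + 6*a6*r^5) * (r^3+1)^p
        + (a0 + a1*r + a2*r^2 + a3*r^3 + a4*r^4 + a5*r^5 + a6*r^6)
          * (3*r^2*p*(r^3+1)^(p-1))) r :=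
  (polyD a0 a1 a2 a3 a4 a5 a6 r).mul (rpowD p r h)

/-- On an open interval where `r³ + 1 > 0`,
`Φ(r) = (α(2r³ − 1) + βr(r³ − 2))·(r³ + 1)^{−4/3}` solves the algebraic form of the
spin 4 equianharmonic Lamé equation `(r³+1)²Φ'' + 2r²(r³+1)Φ' + 20rΦ = 0`, and
`Ψ(r) = (δr + γ)·(r³ + 1)^{−1/3}` solves the spin 1 equation
`(r³+1)²Ψ'' + 2r²(r³+1)Ψ' + 2rΨ = 0`. -/
theorem spin4_and_spin1_algebraic_lame_solutions
    (α β γ δ : ℝ) (I : Set ℝ) (hIopen : IsOpen I) (hIint : I.OrdConnected)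
    (hpos : ∀ r ∈ I, (0 : ℝ) < r ^ 3 + 1) :
    (∀ r ∈ I,
        (r ^ 3 + 1) ^ 2 *
            deriv (deriv (fun t : ℝ =>
              (α * (2 * t ^ 3 - 1) + β * t * (t ^ 3 - 2)) * (t ^ 3 + 1) ^ (-(4 : ℝ) / 3))) r
          + 2 * r ^ 2 * (r ^ 3 + 1) *
            deriv (fun t : ℝ =>
              (α * (2 * t ^ 3 - 1) + β * t * (t ^ 3 - 2)) * (t ^ 3 + 1) ^ (-(4 : ℝ) / 3)) r
          + 20 * r *
            ((α * (2 * r ^ 3 - 1) + β * r * (r ^ 3 - 2)) * (r ^ 3 + 1) ^ (-(4 : ℝ) / 3))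
          = 0) ∧
    (∀ r ∈ I,
        (r ^ 3 + 1) ^ 2 *
            deriv (deriv (fun t : ℝ => (δ * t + γ) * (t ^ 3 + 1) ^ (-(1 : ℝ) / 3))) r
          + 2 * r ^ 2 * (r ^ 3 + 1) *
            deriv (fun t : ℝ => (δ * t + γ) * (t ^ 3 + 1) ^ (-(1 : ℝ) / 3)) r
          + 2 * r * ((δ * r + γ) * (r ^ 3 + 1) ^ (-(1 : ℝ) / 3))
          = 0) := by
  constructor
  · intro r hr
    have hxr := hpos r hr
    have hne : (r^3+1) ≠ 0 := hxr.ne'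
    -- rewrite the function into polynomial × rpow shape
    have hfun : (fun t : ℝ =>
          (α * (2 * t ^ 3 - 1) + β * t * (t ^ 3 - 2)) * (t ^ 3 + 1) ^ (-(4 : ℝ) / 3))
        = fun t : ℝ =>
          ((-α) + (-2*β)*t + 0*t^2 + (2*α)*t^3 + β*t^4 + 0*t^5 + 0*t^6)
            * (t^3+1)^(-(4 : ℝ) / 3) := by
      funext t; ring
    rw [hfun]
    -- first derivative
    have H1 : ∀ s : ℝ, 0 < s^3+1 →
        HasDerivAt (fun t : ℝ =>
            ((-α) + (-2*β)*t + 0*t^2 + (2*α)*t^3 + β*t^4 + 0*t^5 + 0*t^6)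
              * (t^3+1)^(-(4 : ℝ) / 3))
          (((-2*β) + 2*0*s + 3*(2*α)*s^2 + 4*β*s^3 + 5*0*s^4 + 6*0*s^5) * (s^3+1)^(-(4 : ℝ) / 3)
            + ((-α) + (-2*β)*s + 0*s^2 + (2*α)*s^3 + β*s^4 + 0*s^5 + 0*s^6)
              * (3*s^2*(-(4 : ℝ) / 3)*(s^3+1)^(-(4 : ℝ) / 3-1))) s :=
      fun s hs => prodD (-α) (-2*β) 0 (2*α) β 0 0 (-(4 : ℝ) / 3) s hs
    set G : ℝ → ℝ := fun s =>
      (((-2*β) + 2*0*s + 3*(2*α)*s^2 + 4*β*s^3 + 5*0*s^4 + 6*0*s^5) * (s^3+1)^(-(4 : ℝ) / 3)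
        + ((-α) + (-2*β)*s + 0*s^2 + (2*α)*s^3 + β*s^4 + 0*s^5 + 0*s^6)
          * (3*s^2*(-(4 : ℝ) / 3)*(s^3+1)^(-(4 : ℝ) / 3-1))) with hG
    have hEq : deriv (fun t : ℝ =>
          ((-α) + (-2*β)*t + 0*t^2 + (2*α)*t^3 + β*t^4 + 0*t^5 + 0*t^6)
            * (t^3+1)^(-(4 : ℝ) / 3)) =ᶠ[nhds r] G := by
      filter_upwards [hIopen.mem_nhds hr] with s hs
      exact (H1 s (hpos s hs)).deriv
    have hd2 : deriv (deriv (fun t : ℝ =>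
        ((-α) + (-2*β)*t + 0*t^2 + (2*α)*t^3 + β*t^4 + 0*t^5 + 0*t^6)
          * (t^3+1)^(-(4 : ℝ) / 3))) r = deriv G r := hEq.deriv_eq
    -- rewrite G as a sum of two prodD shapes
    have hG2 : G = fun s : ℝ =>
        ((-2*β) + 0*s + (6*α)*s^2 + (4*β)*s^3 + 0*s^4 + 0*s^5 + 0*s^6) * (s^3+1)^(-(4 : ℝ) / 3)
          + (0 + 0*s + (4*α)*s^2 + (8*β)*s^3 + 0*s^4 + (-8*α)*s^5 + (-4*β)*s^6)
            * (s^3+1)^(-(4 : ℝ) / 3-1) := by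
      funext s; rw [hG]; ring
    have HG : HasDerivAt (fun s : ℝ =>
        ((-2*β) + 0*s + (6*α)*s^2 + (4*β)*s^3 + 0*s^4 + 0*s^5 + 0*s^6) * (s^3+1)^(-(4 : ℝ) / 3)
          + (0 + 0*s + (4*α)*s^2 + (8*β)*s^3 + 0*s^4 + (-8*α)*s^5 + (-4*β)*s^6)
            * (s^3+1)^(-(4 : ℝ) / 3-1))
        (((0 + 2*(6*α)*r + 3*(4*β)*r^2 + 4*0*r^3 + 5*0*r^4 + 6*0*r^5) * (r^3+1)^(-(4 : ℝ) / 3)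
          + ((-2*β) + 0*r + (6*α)*r^2 + (4*β)*r^3 + 0*r^4 + 0*r^5 + 0*r^6)
            * (3*r^2*(-(4 : ℝ) / 3)*(r^3+1)^(-(4 : ℝ) / 3-1)))
         + ((0 + 2*(4*α)*r + 3*(8*β)*r^2 + 4*0*r^3 + 5*(-8*α)*r^4 + 6*(-4*β)*r^5)
              * (r^3+1)^(-(4 : ℝ) / 3-1)
          + (0 + 0*r + (4*α)*r^2 + (8*β)*r^3 + 0*r^4 + (-8*α)*r^5 + (-4*β)*r^6)
            * (3*r^2*(-(4 : ℝ) / 3-1)*(r^3+1)^(-(4 : ℝ) / 3-1-1)))) r :=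
      (prodD (-2*β) 0 (6*α) (4*β) 0 0 0 (-(4 : ℝ) / 3) r hxr).add
        (prodD 0 0 (4*α) (8*β) 0 (-8*α) (-4*β) (-(4 : ℝ) / 3-1) r hxr)
    rw [hd2, hG2, HG.deriv, (H1 r hxr).deriv]
    rw [show (-(4 : ℝ) / 3-1-1) = (-(4 : ℝ) / 3-1) - 1 from rfl,
      Real.rpow_sub hxr (-(4 : ℝ) / 3-1) 1, Real.rpow_sub hxr (-(4 : ℝ) / 3) 1, Real.rpow_one]
    field_simp
    ring
  · intro r hr
    have hxr := hpos r hr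
    have hne : (r^3+1) ≠ 0 := hxr.ne'
    have hfun : (fun t : ℝ => (δ * t + γ) * (t ^ 3 + 1) ^ (-(1 : ℝ) / 3))
        = fun t : ℝ =>
          (γ + δ*t + 0*t^2 + 0*t^3 + 0*t^4 + 0*t^5 + 0*t^6) * (t^3+1)^(-(1 : ℝ) / 3) := by
      funext t; ring
    rw [hfun]
    have H1 : ∀ s : ℝ, 0 < s^3+1 →
        HasDerivAt (fun t : ℝ =>
            (γ + δ*t + 0*t^2 + 0*t^3 + 0*t^4 + 0*t^5 + 0*t^6) * (t^3+1)^(-(1 : ℝ) / 3))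
          ((δ + 2*0*s + 3*0*s^2 + 4*0*s^3 + 5*0*s^4 + 6*0*s^5) * (s^3+1)^(-(1 : ℝ) / 3)
            + (γ + δ*s + 0*s^2 + 0*s^3 + 0*s^4 + 0*s^5 + 0*s^6)
              * (3*s^2*(-(1 : ℝ) / 3)*(s^3+1)^(-(1 : ℝ) / 3-1))) s :=
      fun s hs => prodD γ δ 0 0 0 0 0 (-(1 : ℝ) / 3) s hs
    set G : ℝ → ℝ := fun s =>
      ((δ + 2*0*s + 3*0*s^2 + 4*0*s^3 + 5*0*s^4 + 6*0*s^5) * (s^3+1)^(-(1 : ℝ) / 3)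
        + (γ + δ*s + 0*s^2 + 0*s^3 + 0*s^4 + 0*s^5 + 0*s^6)
          * (3*s^2*(-(1 : ℝ) / 3)*(s^3+1)^(-(1 : ℝ) / 3-1))) with hG
    have hEq : deriv (fun t : ℝ =>
          (γ + δ*t + 0*t^2 + 0*t^3 + 0*t^4 + 0*t^5 + 0*t^6) * (t^3+1)^(-(1 : ℝ) / 3))
        =ᶠ[nhds r] G := by
      filter_upwards [hIopen.mem_nhds hr] with s hs
      exact (H1 s (hpos s hs)).deriv
    have hd2 : deriv (deriv (fun t : ℝ =>
        (γ + δ*t + 0*t^2 + 0*t^3 + 0*t^4 + 0*t^5 + 0*t^6) * (t^3+1)^(-(1 : ℝ) / 3))) r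
        = deriv G r := hEq.deriv_eq
    have hG2 : G = fun s : ℝ =>
        (δ + 0*s + 0*s^2 + 0*s^3 + 0*s^4 + 0*s^5 + 0*s^6) * (s^3+1)^(-(1 : ℝ) / 3)
          + (0 + 0*s + (-γ)*s^2 + (-δ)*s^3 + 0*s^4 + 0*s^5 + 0*s^6)
            * (s^3+1)^(-(1 : ℝ) / 3-1) := by
      funext s; rw [hG]; ring
    have HG : HasDerivAt (fun s : ℝ =>
        (δ + 0*s + 0*s^2 + 0*s^3 + 0*s^4 + 0*s^5 + 0*s^6) * (s^3+1)^(-(1 : ℝ) / 3)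
          + (0 + 0*s + (-γ)*s^2 + (-δ)*s^3 + 0*s^4 + 0*s^5 + 0*s^6)
            * (s^3+1)^(-(1 : ℝ) / 3-1))
        (((0 + 2*0*r + 3*0*r^2 + 4*0*r^3 + 5*0*r^4 + 6*0*r^5) * (r^3+1)^(-(1 : ℝ) / 3)
          + (δ + 0*r + 0*r^2 + 0*r^3 + 0*r^4 + 0*r^5 + 0*r^6)
            * (3*r^2*(-(1 : ℝ) / 3)*(r^3+1)^(-(1 : ℝ) / 3-1)))
         + ((0 + 2*(-γ)*r + 3*(-δ)*r^2 + 4*0*r^3 + 5*0*r^4 + 6*0*r^5)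
              * (r^3+1)^(-(1 : ℝ) / 3-1)
          + (0 + 0*r + (-γ)*r^2 + (-δ)*r^3 + 0*r^4 + 0*r^5 + 0*r^6)
            * (3*r^2*(-(1 : ℝ) / 3-1)*(r^3+1)^(-(1 : ℝ) / 3-1-1)))) r :=
      (prodD δ 0 0 0 0 0 0 (-(1 : ℝ) / 3) r hxr).add
        (prodD 0 0 (-γ) (-δ) 0 0 0 (-(1 : ℝ) / 3-1) r hxr)
    rw [hd2, hG2, HG.deriv, (H1 r hxr).deriv]
    rw [show (-(1 : ℝ) / 3-1-1) = (-(1 : ℝ) / 3-1) - 1 from rfl,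
      Real.rpow_sub hxr (-(1 : ℝ) / 3-1) 1, Real.rpow_sub hxr (-(1 : ℝ) / 3) 1, Real.rpow_one]
    field_simp
    ring
end
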